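/- Fix integers J and J₀ with 1 ≤ J₀ ≤ J − 2, and let 𝒵 = {z : Fin J | z = 0 ∨ J₀ ≤ z} with base point 0 ∈ 𝒵. Let q be a probability mass function (PMF) on 𝒵 → Fin J such that every d in the support of q has the base-state default property. Then for every σ : Fin J → 𝒵 such that σ j ≠ j (as elements of Fin J) whenever J₀ ≤ j, one has ∑_{j ∈ Fin J} q({d : 𝒵 → Fin J | d (σ j) = j}) ≤ 1. -/

import Mathlib

/-- The instrument set `𝒵 = {z : Fin J | z = 0 ∨ J₀ ≤ z}`. -/
abbrev Zcal (J J₀ : ℕ) : Type := {z : Fin J // (z : ℕ) = 0 ∨ J₀ ≤ (z : ℕ)}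

/-!
Let `d` be in the support of `q` with `d (σ j) = j`. Either `d (σ j) = d 0`, or `d (σ j) = σ j`;
in the second case `σ j = j`, which the hypothesis on `σ` allows only for `σ j = 0`. Either way
`j = d 0`, so the events `{d | d (σ j) = j}` are disjoint on the support of `q`.
-/

theorem PMF.sum_toOuterMeasure_le_one {α ι : Type*} [Fintype ι] (p : PMF α) (A : ι → Set α)
    (hA : ∀ a ∈ p.support, {i | a ∈ A i}.Subsingleton) :
    ∑ i, p.toOuterMeasure (A i) ≤ 1 := by
  -- every set is measurable, so `p.toMeasure` is additive on the events `A i ∩ p.support`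
  let _ : MeasurableSpace α := ⊤
  have hdisj : Pairwise (Function.onFun Disjoint fun i => A i ∩ p.support) :=
    fun i j hij => Set.disjoint_left.2 fun a hai haj => hij (hA a hai.2 hai.1 haj.1)
  calc ∑ i, p.toOuterMeasure (A i) = ∑ i, p.toMeasure (A i ∩ p.support) := by
        simp only [PMF.toMeasure_apply_eq_toOuterMeasure, PMF.toOuterMeasure_apply_inter_support]
    _ = p.toMeasure (⋃ i, A i ∩ p.support) := by
        rw [MeasureTheory.measure_iUnion hdisj fun _ => trivial, tsum_fintype]
    _ ≤ 1 := MeasureTheory.prob_le_one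

section BaseStateDefault

variable {Z X : Type*} {ι : Z → X} {z₀ : Z} {d : Z → X} {σ : X → Z}

theorem apply_base_eq_of_apply_eq (hd : ∀ z, d z = ι z ∨ d z = d z₀)
    (hσ : ∀ j, ι (σ j) = j → σ j = z₀) {j : X} (hj : d (σ j) = j) : d z₀ = j := by
  rcases hd (σ j) with h | h
  · rwa [← hσ j (h ▸ hj)]
  · rw [← h, hj]

theorem setOf_apply_eq_subsingleton (hd : ∀ z, d z = ι z ∨ d z = d z₀)
    (hσ : ∀ j, ι (σ j) = j → σ j = z₀) : {j | d (σ j) = j}.Subsingleton :=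
  fun _ hj _ hk =>
    (apply_base_eq_of_apply_eq hd hσ hj).symm.trans (apply_base_eq_of_apply_eq hd hσ hk)

end BaseStateDefault

theorem Zcal.eq_zero_of_val_eq {J J₀ : ℕ} (hJ : 0 < J) {σ : Fin J → Zcal J J₀}
    (hσ : ∀ j : Fin J, J₀ ≤ (j : ℕ) → ((σ j : Fin J) ≠ j)) (j : Fin J) (hj : (σ j : Fin J) = j) :
    σ j = ⟨⟨0, hJ⟩, Or.inl rfl⟩ := by
  rcases (σ j).property with h | h
  · exact Subtype.ext (Fin.ext h)
  · exact absurd hj (hσ j (hj ▸ h))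

/-- Theorem 1 of the paper in the case J₀ > 0, at the level of the
distribution of potential treatments. -/
theorem stmt_5 (J J₀ : ℕ) (hJ : J₀ + 2 ≤ J)
    (q : PMF (Zcal J J₀ → Fin J))
    (hq : ∀ d ∈ q.support, ∀ z : Zcal J J₀,
      d z = (z : Fin J) ∨ d z = d ⟨⟨0, by omega⟩, Or.inl rfl⟩)
    (σ : Fin J → Zcal J J₀)
    (hσ : ∀ j : Fin J, J₀ ≤ (j : ℕ) → ((σ j : Fin J) ≠ j)) :
    ∑ j : Fin J, q.toOuterMeasure {d : Zcal J J₀ → Fin J | d (σ j) = j} ≤ 1 :=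
  q.sum_toOuterMeasure_le_one _ fun d hd =>
    setOf_apply_eq_subsingleton (hq d hd) (Zcal.eq_zero_of_val_eq (by omega) hσ)
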